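/- arXiv:1406.6246 — 5 statements merged into one kernel-verified Lean document; each statement's English description precedes it below -/
import Mathlib

section
/- Let A be an integral domain of characteristic zero and B a locally nilpotent derivation of A. Then the kernel of B is factorially closed: if f, g ∈ A are nonzero and fg ∈ ker B, then f ∈ ker B and g ∈ ker B. -/
/-!
For `a ≠ 0` let `deg a` be the largest `m` with `D^[m] a ≠ 0`. By the general Leibniz rule,
`D^[deg f + deg g] (f * g)` collapses to the single term
`(deg f + deg g).choose (deg f) • (D^[deg f] f * D^[deg g] g)`, which is nonzero in a domain of
characteristic zero. So `deg (f * g) = deg f + deg g`, and `D (f * g) = 0` forces both degrees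
to vanish.
-/

namespace Derivation

open Finset

variable {R A : Type*} [CommSemiring R] [CommSemiring A] [Algebra R A] (D : Derivation R A A)

theorem iterate_apply_mul (n : ℕ) (a b : A) :
    D^[n] (a * b) = ∑ ij ∈ antidiagonal n, n.choose ij.1 • (D^[ij.1] a * D^[ij.2] b) := by
  induction n with
  | zero => simp
  | succ n ih =>
    rw [sum_antidiagonal_choose_succ_nsmul (M := A) (fun i j => D^[i] a * D^[j] b) n]
    simp only [Function.iterate_succ_apply', ih, map_sum, map_nsmul, leibniz, smul_eq_mul,
      smul_add, sum_add_distrib]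
    congr 1
    refine sum_congr rfl fun ⟨i, j⟩ hij ↦ ?_
    rw [n.choose_symm_of_eq_add (mem_antidiagonal.1 hij).symm, mul_comm]

variable {D}

theorem iterate_eq_zero_of_le {a : A} {k l : ℕ} (h : D^[k] a = 0) (hkl : k ≤ l) :
    D^[l] a = 0 := by
  obtain ⟨d, rfl⟩ := Nat.exists_eq_add_of_le hkl
  rw [add_comm, Function.iterate_add_apply, h, Function.iterate_fixed D.map_zero]

theorem exists_iterate_ne_zero_iterate_succ_eq_zero {a : A} (ha : a ≠ 0)
    (h : ∃ n, D^[n] a = 0) : ∃ m, D^[m] a ≠ 0 ∧ D^[m + 1] a = 0 := by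
  classical
  have hpos : Nat.find h ≠ 0 := fun h0 ↦ ha (by simpa [h0] using Nat.find_spec h)
  refine ⟨Nat.find h - 1, Nat.find_min h (by omega), ?_⟩
  rw [Nat.sub_add_cancel (Nat.one_le_iff_ne_zero.2 hpos)]
  exact Nat.find_spec h

theorem iterate_add_apply_mul_of_iterate_succ_eq_zero {a b : A} {m n : ℕ}
    (ha : D^[m + 1] a = 0) (hb : D^[n + 1] b = 0) :
    D^[m + n] (a * b) = (m + n).choose m • (D^[m] a * D^[n] b) := by
  rw [iterate_apply_mul]
  refine sum_eq_single_of_mem (m, n) (mem_antidiagonal.2 rfl) fun ⟨i, j⟩ hij hne ↦ ?_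
  rw [HasAntidiagonal.mem_antidiagonal] at hij
  have him : i ≠ m := fun him ↦ hne (Prod.ext him (by simp only at hij ⊢; omega))
  rcases lt_or_gt_of_ne him with hi | hi
  · rw [iterate_eq_zero_of_le hb (by omega : n + 1 ≤ j), mul_zero, smul_zero]
  · rw [iterate_eq_zero_of_le ha (by omega : m + 1 ≤ i), zero_mul, smul_zero]

end Derivation

/-- The kernel of a locally nilpotent derivation of an integral domain of
characteristic zero is factorially closed. -/
theorem ker_factoriallyClosed_of_locallyNilpotent {A : Type*} [CommRing A] [IsDomain A]
    [CharZero A] (B : Derivation ℤ A A) (hB : ∀ a : A, ∃ n : ℕ, (⇑B)^[n] a = 0)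
    (f g : A) (hf : f ≠ 0) (hg : g ≠ 0) (hfg : B (f * g) = 0) :
    B f = 0 ∧ B g = 0 := by
  obtain ⟨m, hm, hm1⟩ := Derivation.exists_iterate_ne_zero_iterate_succ_eq_zero hf (hB f)
  obtain ⟨n, hn, hn1⟩ := Derivation.exists_iterate_ne_zero_iterate_succ_eq_zero hg (hB g)
  have hprod : (⇑B)^[m + n] (f * g) ≠ 0 := by
    rw [Derivation.iterate_add_apply_mul_of_iterate_succ_eq_zero hm1 hn1, nsmul_eq_mul]
    exact mul_ne_zero (Nat.cast_ne_zero.2 (Nat.choose_pos (m.le_add_right n)).ne')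
      (mul_ne_zero hm hn)
  have hmn : m + n = 0 := by
    by_contra h
    exact hprod (Derivation.iterate_eq_zero_of_le (k := 1) hfg (by omega))
  obtain ⟨rfl, rfl⟩ : m = 0 ∧ n = 0 := by omega
  exact ⟨hm1, hn1⟩
end

section
/- Let A be a ℚ-algebra that is an integral domain. The exponential map B ↦ exp(B) from the set of locally nilpotent derivations of A to the set of ℚ-algebra automorphisms of A is injective. -/
open Finset

/-- `E` is the exponential of the locally nilpotent map `D`:
for every `a` and every `N` beyond the nilpotency index of `a`,
`E a = ∑_{i<N} D^i(a) / i!`. -/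
def IsExp {A : Type*} [CommRing A] [Algebra ℚ A] (D E : A → A) : Prop :=
  ∀ (a : A) (N : ℕ), (∀ i, N ≤ i → D^[i] a = 0) →
    E a = ∑ i ∈ Finset.range N, ((i.factorial : ℚ)⁻¹) • D^[i] a

/-!
If `B^n a = 0`, then `E^m a = ∑_{i<n} m^i B^i a / i!` for every `m : ℕ`: modulo `X^n`, applying
`E` to `q(B) a` multiplies `q` by `exp X`, and `(exp X)^m = exp (m X)`. So `m ↦ E^m a` is a
polynomial in `m` with coefficients `B^i a / i!`. A polynomial over a `ℚ`-algebra vanishing at all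
natural numbers is zero, since its `d`-th forward difference is `d!` times its leading coefficient;
comparing the coefficients of `m` gives `B a = B' a`.
-/

open scoped Nat
open Polynomial

theorem Polynomial.eq_zero_of_forall_eval_natCast_eq_zero {R : Type*} [CommRing R]
    [Algebra ℚ R] {p : R[X]} (h : ∀ m : ℕ, p.eval (m : R) = 0) : p = 0 := by
  have hΔ := congrFun p.fwdDiff_iter_degree_eq_factorial 0
  simp only [fwdDiff_iter_eq_sum_shift, zero_add, nsmul_one, h, smul_zero, sum_const_zero,
    Pi.smul_apply, Pi.natCast_apply, smul_eq_mul] at hΔ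
  have hunit : IsUnit (p.natDegree ! : R) := by
    simpa using (IsUnit.mk0 (p.natDegree ! : ℚ) (by positivity)).map (algebraMap ℚ R)
  exact leadingCoeff_eq_zero.mp (hunit.mul_left_eq_zero.mp hΔ.symm)

theorem eq_of_forall_sum_natCast_pow_smul_eq {A : Type*} [CommRing A] [Algebra ℚ A] {n : ℕ}
    {v w : ℕ → A}
    (h : ∀ m : ℕ, ∑ i ∈ range n, (m : ℚ) ^ i • v i = ∑ i ∈ range n, (m : ℚ) ^ i • w i) :
    ∀ i < n, v i = w i := by
  have hp : ∑ i ∈ range n, monomial i (v i - w i) = 0 := by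
    refine eq_zero_of_forall_eval_natCast_eq_zero fun m => ?_
    have hsmul : ∀ x : A, ∀ i, x * (m : A) ^ i = (m : ℚ) ^ i • x := fun x i => by
      rw [Algebra.smul_def, mul_comm, map_pow, map_natCast]
    simp only [eval_finsetSum, eval_monomial, hsmul, smul_sub, sum_sub_distrib, h, sub_self]
  intro i hi
  simpa [finsetSum_coeff, coeff_monomial, hi, sub_eq_zero] using congrArg (coeff · i) hp

section Truncation

variable {R M : Type*} [CommSemiring R] [AddCommMonoid M] [Module R M]
  {D : Module.End R M} {a : M} {n : ℕ}

theorem aeval_apply_eq_sum_range (ha : (D ^ n) a = 0) (q : R[X]) :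
    aeval D q a = ∑ i ∈ range n, q.coeff i • (D ^ i) a := by
  rw [aeval_eq_sum_range' (n := max n (q.natDegree + 1)) (by omega), LinearMap.sum_apply]
  simp only [LinearMap.smul_apply]
  refine (sum_subset (range_subset_range.2 (le_max_left _ _)) fun i _ hi => ?_).symm
  rw [Module.End.pow_map_zero_of_le (by simpa using hi) ha, smul_zero]

theorem aeval_trunc_coe_apply (ha : (D ^ n) a = 0) (q : R[X]) :
    aeval D (PowerSeries.trunc n (q : PowerSeries R)) a = aeval D q a := by
  rw [aeval_apply_eq_sum_range ha, aeval_apply_eq_sum_range ha]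
  refine sum_congr rfl fun i hi => ?_
  rw [PowerSeries.coeff_trunc, if_pos (mem_range.1 hi), Polynomial.coeff_coe]

theorem iterate_eq_zero_of_pow_apply_eq_zero (ha : (D ^ n) a = 0) {i : ℕ} (hi : n ≤ i) :
    (⇑D)^[i] a = 0 := by
  rw [← Module.End.pow_apply]
  exact Module.End.pow_map_zero_of_le hi ha

end Truncation

namespace IsExp

open PowerSeries

variable {A : Type*} [CommRing A] [Algebra ℚ A] {D : Module.End ℚ A} {E : A → A} {a : A} {n : ℕ}

theorem apply_eq_aeval_trunc_exp (hE : IsExp D E) (ha : (D ^ n) a = 0) :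
    E a = aeval D (trunc n (exp ℚ)) a := by
  rw [hE a n fun i => iterate_eq_zero_of_pow_apply_eq_zero ha, aeval_apply_eq_sum_range ha]
  refine sum_congr rfl fun i hi => ?_
  simp [coeff_trunc, mem_range.1 hi, Module.End.pow_apply]

theorem apply_aeval (hE : IsExp D E) (ha : (D ^ n) a = 0) (q : ℚ[X]) :
    E (aeval D q a) = aeval D (trunc n (exp ℚ) * q) a := by
  have hcomm : Commute (D ^ n) (aeval D q) := by
    simpa using (commute_X_pow q n).map (aeval D)
  have hqa : (D ^ n) (aeval D q a) = 0 := by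
    rw [← Module.End.mul_apply, hcomm.eq, Module.End.mul_apply, ha, map_zero]
  rw [hE.apply_eq_aeval_trunc_exp hqa, map_mul, Module.End.mul_apply]

theorem iterate_apply_eq_aeval (hE : IsExp D E) (ha : (D ^ n) a = 0) (m : ℕ) :
    E^[m] a = aeval D (trunc n (exp ℚ ^ m)) a := by
  induction m with
  | zero => simpa using (aeval_trunc_coe_apply ha 1).symm
  | succ m ih =>
    rw [Function.iterate_succ_apply', ih, hE.apply_aeval ha, ← aeval_trunc_coe_apply ha,
      Polynomial.coe_mul, trunc_trunc_mul_trunc, ← pow_succ']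

theorem iterate_apply_eq_sum (hE : IsExp D E) (ha : (D ^ n) a = 0) (m : ℕ) :
    E^[m] a = ∑ i ∈ range n, (m : ℚ) ^ i • ((i ! : ℚ)⁻¹ • (D ^ i) a) := by
  rw [hE.iterate_apply_eq_aeval ha, aeval_apply_eq_sum_range ha]
  refine sum_congr rfl fun i hi => ?_
  simp [coeff_trunc, mem_range.1 hi, exp_pow_eq_rescale_exp, coeff_rescale, mul_smul]

end IsExp

theorem exp_injective_general {A : Type*} [CommRing A] [Algebra ℚ A]
    (B B' : Derivation ℚ A A)
    (hB : ∀ a : A, ∃ n : ℕ, (⇑B)^[n] a = 0) (hB' : ∀ a : A, ∃ n : ℕ, (⇑B')^[n] a = 0)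
    (E : A → A) (hE : IsExp (⇑B) E) (hE' : IsExp (⇑B') E) :
    B = B' := by
  ext a
  obtain ⟨n, hn⟩ := hB a
  obtain ⟨n', hn'⟩ := hB' a
  have hBa : ((B : Module.End ℚ A) ^ (n + n' + 2)) a = 0 :=
    Module.End.pow_map_zero_of_le (k := n) (by omega) (by rwa [Module.End.pow_apply])
  have hB'a : ((B' : Module.End ℚ A) ^ (n + n' + 2)) a = 0 :=
    Module.End.pow_map_zero_of_le (k := n') (by omega) (by rwa [Module.End.pow_apply])
  have key := eq_of_forall_sum_natCast_pow_smul_eq fun m =>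
    (IsExp.iterate_apply_eq_sum (D := (B : Module.End ℚ A)) hE hBa m).symm.trans
      (IsExp.iterate_apply_eq_sum (D := (B' : Module.End ℚ A)) hE' hB'a m)
  simpa using key 1 (by omega)

/-- The exponential map is injective on locally nilpotent derivations of an
integral domain that is a `ℚ`-algebra. -/
theorem exp_injective {A : Type*} [CommRing A] [IsDomain A] [Algebra ℚ A]
    (B B' : Derivation ℚ A A)
    (hB : ∀ a : A, ∃ n : ℕ, (⇑B)^[n] a = 0) (hB' : ∀ a : A, ∃ n : ℕ, (⇑B')^[n] a = 0)
    (E : A → A) (hE : IsExp (⇑B) E) (hE' : IsExp (⇑B') E) :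
    B = B' :=
  exp_injective_general B B' hB hB' E hE hE'
end

section
/- Let A be a ℚ-algebra that is an integral domain, and let B be a derivation of A and s ∈ A with B(s) = 1 and B locally nilpotent. Then A is a polynomial ring in s over ker B; that is, the evaluation map (ker B)[X] → A sending X to s is an isomorphism of (ker B)-algebras, and under this identification B corresponds to d/ds. -/
/-!
By the Leibniz rule `B (p(s)) = p'(s) · B s = p'(s)`, so `B` acts as `d/ds` on polynomials in `s`.
Injectivity: if `p(s) = 0` then `p'(s) = 0`, so by induction on the degree `p' = 0`; in
characteristic zero `p` is then a constant of `ker B ⊆ A`, hence zero.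
Surjectivity, by induction on the `n` with `Bⁿ a = 0`: write `B a = p(s)`, integrate `p` to `q`
(possible over `ℚ`); then `a - q(s) ∈ ker B`, so `a = (q + c)(s)` for a constant `c`.
-/

def Derivation.kerSubalgebra {A : Type*} [CommRing A] [Algebra ℚ A]
    (B : Derivation ℚ A A) : Subalgebra ℚ A where
  carrier := {a | B a = 0}
  mul_mem' := by
    intro a b ha hb
    simp only [Set.mem_setOf_eq] at *
    rw [Derivation.leibniz]
    simp [ha, hb]
  add_mem' := by
    intro a b ha hb
    simp only [Set.mem_setOf_eq] at *
    rw [map_add, ha, hb, add_zero]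
  algebraMap_mem' := fun r => by
    simp [Set.mem_setOf_eq]

open Polynomial

theorem Polynomial.derivative_surjective_of_algebra_rat {R : Type*} [Semiring R] [Algebra ℚ R] :
    Function.Surjective (derivative : R[X] →ₗ[R] R[X]) := by
  intro p
  induction p using Polynomial.induction_on' with
  | add p q hp hq =>
    obtain ⟨p', rfl⟩ := hp
    obtain ⟨q', rfl⟩ := hq
    exact ⟨p' + q', map_add _ _ _⟩
  | monomial n a =>
    refine ⟨monomial (n + 1) (((n + 1 : ℕ) : ℚ)⁻¹ • a), ?_⟩
    rw [derivative_monomial, Nat.add_sub_cancel, ← nsmul_eq_mul', ← Nat.cast_smul_eq_nsmul ℚ,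
      smul_smul, mul_inv_cancel₀ (Nat.cast_ne_zero.2 n.succ_ne_zero), one_smul]

namespace Derivation

section PolynomialInSlice

variable {K A : Type*} [CommRing K] [CommRing A] [Algebra K A] {D : Derivation K A A} {s : A}

theorem apply_aeval_of_apply_eq_one (hs : D s = 1) (p : K[X]) :
    D (aeval s p) = aeval s (derivative p) := by
  rw [map_aeval, hs, smul_eq_mul, mul_one]

theorem aeval_injective_of_apply_eq_one [IsAddTorsionFree K]
    (hK : Function.Injective (algebraMap K A)) (hs : D s = 1) :
    Function.Injective (aeval s : K[X] →ₐ[K] A) := by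
  rw [injective_iff_map_eq_zero]
  intro p hp
  induction hd : p.natDegree using Nat.strong_induction_on generalizing p with
  | _ n ih =>
    have hp' : derivative p = 0 := by
      by_contra h
      exact h (ih _ (hd ▸ natDegree_derivative_lt (derivative_ne_zero.1 h)) _
        (by rw [← apply_aeval_of_apply_eq_one hs, hp, map_zero]) rfl)
    rw [eq_C_of_derivative_eq_zero hp'] at hp ⊢
    rw [aeval_C] at hp
    rw [(map_eq_zero_iff _ hK).1 hp, map_zero]

theorem exists_aeval_eq_of_iterate_eq_zero [Algebra ℚ K]
    (hker : ∀ a, D a = 0 → a ∈ Set.range (algebraMap K A)) (hs : D s = 1) (n : ℕ) :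
    ∀ a : A, (⇑D)^[n] a = 0 → ∃ p : K[X], aeval s p = a := by
  induction n with
  | zero =>
    intro a ha
    rw [Function.iterate_zero_apply] at ha
    exact ⟨0, by rw [map_zero, ha]⟩
  | succ n ih =>
    intro a ha
    obtain ⟨p, hp⟩ := ih (D a) ha
    obtain ⟨q, rfl⟩ := derivative_surjective_of_algebra_rat p
    obtain ⟨c, hc⟩ := hker (a - aeval s q) <| by
      rw [map_sub, apply_aeval_of_apply_eq_one hs, hp, sub_self]
    exact ⟨q + C c, by rw [map_add, aeval_C, hc, add_sub_cancel]⟩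

end PolynomialInSlice

variable {A : Type*} [CommRing A] [Algebra ℚ A]

theorem mem_kerSubalgebra {B : Derivation ℚ A A} {a : A} : a ∈ B.kerSubalgebra ↔ B a = 0 :=
  Iff.rfl

def extendScalarsToKer (B : Derivation ℚ A A) : Derivation B.kerSubalgebra A A :=
  Derivation.mk'
    { toFun := B
      map_add' := B.map_add
      map_smul' := fun k a => by
        rw [Subalgebra.smul_def, smul_eq_mul, leibniz, mem_kerSubalgebra.1 k.2, smul_zero,
          add_zero, RingHom.id_apply, Subalgebra.smul_def] }
    B.leibniz

end Derivation

theorem slice_theorem_general {A : Type*} [CommRing A] [Algebra ℚ A]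
    (B : Derivation ℚ A A) (hB : ∀ a : A, ∃ n : ℕ, (⇑B)^[n] a = 0)
    (s : A) (hs : B s = 1) :
    Function.Bijective (Polynomial.aeval (R := B.kerSubalgebra) s :
        Polynomial B.kerSubalgebra →ₐ[B.kerSubalgebra] A) ∧
    ∀ p : Polynomial B.kerSubalgebra,
      B (Polynomial.aeval (R := B.kerSubalgebra) s p) =
        Polynomial.aeval (R := B.kerSubalgebra) s (Polynomial.derivative p) := by
  have := IsAddTorsionFree.of_module_rat (M := B.kerSubalgebra)
  have hs' : B.extendScalarsToKer s = 1 := hs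
  refine ⟨⟨Derivation.aeval_injective_of_apply_eq_one Subtype.val_injective hs', fun a => ?_⟩,
    Derivation.apply_aeval_of_apply_eq_one hs'⟩
  obtain ⟨n, hn⟩ := hB a
  exact Derivation.exists_aeval_eq_of_iterate_eq_zero (fun a ha => ⟨⟨a, ha⟩, rfl⟩) hs' n a hn

/-- Slice theorem: if `B` is a locally nilpotent derivation of an integral domain
`A` (a `ℚ`-algebra) and `B s = 1`, then `A` is a polynomial ring in `s` over
`ker B`, and `B` corresponds to `d/ds`. -/
theorem slice_theorem {A : Type*} [CommRing A] [IsDomain A] [Algebra ℚ A]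
    (B : Derivation ℚ A A) (hB : ∀ a : A, ∃ n : ℕ, (⇑B)^[n] a = 0)
    (s : A) (hs : B s = 1) :
    Function.Bijective (Polynomial.aeval (R := B.kerSubalgebra) s :
        Polynomial B.kerSubalgebra →ₐ[B.kerSubalgebra] A) ∧
    ∀ p : Polynomial B.kerSubalgebra,
      B (Polynomial.aeval (R := B.kerSubalgebra) s p) =
        Polynomial.aeval (R := B.kerSubalgebra) s (Polynomial.derivative p) :=
  slice_theorem_general B hB s hs
end

section
/- Let A be a unique factorization domain containing ℚ, let B, B' be nonzero locally nilpotent derivations of A with B' irreducible and ker B = ker B'. Let φ : A → A be a ring automorphism that restricts to the identity on ker B and commutes with B, and assume that there exists d ∈ ker B, d ≠ 0, and s in the localization A_d with B(s) = 1 (extending B to A_d). Then there exists f ∈ ker B such that φ = exp(f B'). -/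
open Finset

/-- Local nilpotency of a map. -/
def IsLND {A : Type*} [Zero A] (D : A → A) : Prop := ∀ a : A, ∃ n : ℕ, D^[n] a = 0

/-- A locally nilpotent derivation `B'` is irreducible if `B' ≠ 0` and whenever
`B' = g • B''` with `B''` locally nilpotent and `g ∈ ker B''`, `g` is a unit. -/
def IsIrreducibleLND {A : Type*} [CommRing A] [Algebra ℚ A] (B' : Derivation ℚ A A) : Prop :=
  B' ≠ 0 ∧ IsLND ⇑B' ∧
    ∀ (g : A) (B'' : Derivation ℚ A A), IsLND ⇑B'' → B'' g = 0 → B' = g • B'' → IsUnit g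

/-!
Put `c = B s`, so `B c = 0`. After multiplying by a power of `c`, every element of `A` becomes a
polynomial in `s` with coefficients in `ker B = ker B'`; differentiating such an expression with
`B` and with `B'` gives `B' s * B = c * B'`, and a count of `B`-orders then shows `B' (B' s) = 0`.
So `s` is a local slice of `B'` too, with `u = B' s ∈ ker B'`, and on `A[1/u]` every ring
endomorphism fixing `ker B'` is `exp ((E / u) • B')`, where `E` is the amount by which it shifts
`s`. For `φ ^ t` we have `E = t • e` with `e = φ s - s`, and interpolating in `t` gives
`u ∣ e * B' a` for all `a`. As `B'` is irreducible, no prime of the UFD `A` divides all values of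
`B'`, hence `u ∣ e`, and `f = e / u` is the required kernel element.
-/

theorem inv_natCast_smul_nsmul {K E : Type*} [DivisionRing K] [CharZero K] [AddCommGroup E]
    [Module K E] {n : ℕ} (hn : n ≠ 0) (x : E) : (n : K)⁻¹ • n • x = x := by
  rw [← Nat.cast_smul_eq_nsmul K, inv_smul_smul₀ (Nat.cast_ne_zero.2 hn)]

theorem Matrix.mem_of_forall_sum_smul_mem {K M n : Type*} [CommRing K] [AddCommGroup M]
    [Module K M] [Fintype n] [DecidableEq n] {V : Matrix n n K} (hV : IsUnit V.det)
    {P : Submodule K M} {v : n → M} (hv : ∀ t, ∑ j, V t j • v j ∈ P) (i : n) : v i ∈ P := by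
  have hinv : v i = ∑ t, V⁻¹ i t • ∑ j, V t j • v j := by
    simp only [smul_sum, smul_smul]
    rw [sum_comm]
    simp only [← sum_smul, ← Matrix.mul_apply, Matrix.nonsing_inv_mul V hV, Matrix.one_apply,
      ite_smul, one_smul, zero_smul, sum_ite_eq, mem_univ, if_true]
  rw [hinv]
  exact P.sum_mem fun t _ => P.smul_mem _ (hv t)

namespace Derivation

variable {R A : Type*} [CommRing R] [CommRing A] [Algebra R A] (D : Derivation R A A)

theorem iterate_map_sum {ι : Type*} (n : ℕ) (t : Finset ι) (f : ι → A) :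
    (⇑D)^[n] (∑ i ∈ t, f i) = ∑ i ∈ t, (⇑D)^[n] (f i) := by
  simp only [← coeFn_coe, ← Module.End.coe_pow, map_sum]

theorem iterate_leibniz (n : ℕ) (a b : A) :
    (⇑D)^[n] (a * b) = ∑ ij ∈ antidiagonal n, n.choose ij.1 • ((⇑D)^[ij.1] a * (⇑D)^[ij.2] b) := by
  induction n with
  | zero => simp
  | succ n ih =>
    rw [sum_antidiagonal_choose_succ_nsmul (fun i j => (⇑D)^[i] a * (⇑D)^[j] b) n]
    simp only [Function.iterate_succ_apply', ih, map_sum, map_nsmul, leibniz, smul_eq_mul,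
      nsmul_add, sum_add_distrib]
    congr 1
    refine sum_congr rfl fun ⟨i, j⟩ hij => ?_
    rw [Nat.choose_symm_of_eq_add (HasAntidiagonal.mem_antidiagonal.1 hij).symm]
    ring

theorem iterate_mul_of_map_eq_zero {c : A} (hc : D c = 0) (n : ℕ) (x : A) :
    (⇑D)^[n] (c * x) = c * (⇑D)^[n] x := by
  induction n generalizing x with
  | zero => rfl
  | succ n ih => rw [Function.iterate_succ_apply, leibniz, hc, smul_zero, add_zero, smul_eq_mul, ih,
      Function.iterate_succ_apply]

theorem iterate_smul_of_map_eq_zero {g : A} (hg : D g = 0) (n : ℕ) (x : A) :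
    (⇑(g • D))^[n] x = g ^ n * (⇑D)^[n] x := by
  induction n generalizing x with
  | zero => simp
  | succ n ih =>
    rw [Function.iterate_succ_apply, ih, smul_apply, smul_eq_mul, iterate_mul_of_map_eq_zero D hg,
      Function.iterate_succ_apply]
    ring

theorem map_pow_eq_zero {c : A} (hc : D c = 0) (m : ℕ) : D (c ^ m) = 0 := by
  rw [leibniz_pow, hc, smul_zero, smul_zero]

theorem iterate_pow_of_map_map_eq_zero {s : A} (hs : D (D s) = 0) (j i : ℕ) :
    (⇑D)^[j] (s ^ i) = i.descFactorial j • (s ^ (i - j) * D s ^ j) := by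
  induction j generalizing i with
  | zero => simp
  | succ j ih =>
    rw [Function.iterate_succ_apply, leibniz_pow, smul_eq_mul, iterate_map_nsmul, mul_comm,
      iterate_mul_of_map_eq_zero D hs, ih]
    cases i with
    | zero => simp
    | succ i =>
      simp only [Nat.add_sub_cancel, Nat.add_sub_add_right,
        Nat.succ_descFactorial_succ, nsmul_eq_mul, Nat.cast_mul]
      ring

theorem exists_eq_smul_of_forall_dvd [IsDomain A] {π : A} (hπ : π ≠ 0) (h : ∀ a, π ∣ D a) :
    ∃ D' : Derivation R A A, D = π • D' := by
  choose g hg using h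
  have hg_unique : ∀ a w, D a = π * w → g a = w := fun a w hw =>
    mul_left_cancel₀ hπ ((hg a).symm.trans hw)
  let L : A →ₗ[R] A :=
    { toFun := g
      map_add' := fun x y => hg_unique _ _ (by rw [map_add, hg x, hg y, mul_add])
      map_smul' := fun r x => hg_unique _ _ (by rw [map_smul, hg x, mul_smul_comm]; rfl) }
  refine ⟨⟨L, hg_unique 1 0 (by rw [map_one_eq_zero, mul_zero]), fun x y => hg_unique _ _ ?_⟩, ?_⟩
  · simp only [L, LinearMap.coe_mk, AddHom.coe_mk, smul_eq_mul]
    rw [leibniz, hg x, hg y, smul_eq_mul, smul_eq_mul]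
    ring
  · ext a
    exact hg a

end Derivation

namespace IsLND

variable {R A : Type*} [CommRing R] [CommRing A] [Algebra R A] {D : Derivation R A A}
  (hD : IsLND ⇑D)

open Classical in
/-- One more than the usual degree function of a locally nilpotent derivation (and `0` at `0`). -/
noncomputable def nilOrder (a : A) : ℕ := Nat.find (hD a)

theorem iterate_eq_zero_iff {a : A} {n : ℕ} : (⇑D)^[n] a = 0 ↔ hD.nilOrder a ≤ n := by
  classical
  refine ⟨fun h => Nat.find_le h, fun h => ?_⟩
  obtain ⟨k, rfl⟩ := Nat.exists_eq_add_of_le h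
  rw [add_comm, Function.iterate_add_apply, nilOrder, Nat.find_spec (hD a), iterate_map_zero]

theorem nilOrder_eq_zero_iff {a : A} : hD.nilOrder a = 0 ↔ a = 0 := by
  rw [← Nat.le_zero, ← hD.iterate_eq_zero_iff, Function.iterate_zero_apply]

theorem nilOrder_le_one_iff {a : A} : hD.nilOrder a ≤ 1 ↔ D a = 0 := by
  rw [← hD.iterate_eq_zero_iff, Function.iterate_one]

theorem nilOrder_map (a : A) : hD.nilOrder (D a) = hD.nilOrder a - 1 :=
  eq_of_forall_ge_iff fun n => by
    rw [← hD.iterate_eq_zero_iff, ← Function.iterate_succ_apply, hD.iterate_eq_zero_iff]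
    omega

theorem nilOrder_mul_of_map_eq_zero [IsDomain A] {c : A} (hc : D c = 0) (hc0 : c ≠ 0) (x : A) :
    hD.nilOrder (c * x) = hD.nilOrder x :=
  eq_of_forall_ge_iff fun n => by
    rw [← hD.iterate_eq_zero_iff, ← hD.iterate_eq_zero_iff, D.iterate_mul_of_map_eq_zero hc,
      mul_eq_zero, or_iff_right hc0]

theorem nilOrder_mul [IsDomain A] [CharZero A] {x y : A} (hx : x ≠ 0) (hy : y ≠ 0) :
    hD.nilOrder (x * y) = hD.nilOrder x + hD.nilOrder y - 1 := by
  obtain ⟨p, hp⟩ := Nat.exists_eq_add_one.2 (Nat.pos_of_ne_zero (hD.nilOrder_eq_zero_iff.not.2 hx))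
  obtain ⟨q, hq⟩ := Nat.exists_eq_add_one.2 (Nat.pos_of_ne_zero (hD.nilOrder_eq_zero_iff.not.2 hy))
  have hx_iff : ∀ i, (⇑D)^[i] x = 0 ↔ p < i := fun i => by rw [hD.iterate_eq_zero_iff, hp]; omega
  have hy_iff : ∀ i, (⇑D)^[i] y = 0 ↔ q < i := fun i => by rw [hD.iterate_eq_zero_iff, hq]; omega
  have hterm : ∀ k, ∀ ij ∈ antidiagonal (p + q + k), ij ≠ (p, q) →
      (p + q + k).choose ij.1 • ((⇑D)^[ij.1] x * (⇑D)^[ij.2] y) = 0 := by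
    rintro k ⟨i, j⟩ hij hne
    rw [HasAntidiagonal.mem_antidiagonal] at hij
    rcases lt_or_ge p i with hi | hi
    · rw [(hx_iff i).2 hi, zero_mul, smul_zero]
    · rw [(hy_iff j).2 (by grind), mul_zero, smul_zero]
  have htop : (⇑D)^[p + q + 1] (x * y) = 0 := by
    rw [D.iterate_leibniz]
    refine sum_eq_zero fun ij hij => ?_
    refine hterm 1 ij hij fun h => ?_
    rw [h, HasAntidiagonal.mem_antidiagonal] at hij
    omega
  have hmid : (⇑D)^[p + q + 0] (x * y) ≠ 0 := by
    rw [D.iterate_leibniz, sum_eq_single_of_mem (p, q) (by simp) (hterm 0)]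
    exact smul_ne_zero (Nat.choose_pos (by omega)).ne'
      (mul_ne_zero (mt (hx_iff p).1 (lt_irrefl p)) (mt (hy_iff q).1 (lt_irrefl q)))
  rw [Ne, hD.iterate_eq_zero_iff] at hmid
  rw [hD.iterate_eq_zero_iff] at htop
  omega

include hD in
theorem map_eq_zero_of_dvd [IsDomain A] [CharZero A] {a : A} (h : a ∣ D a) : D a = 0 := by
  by_contra hDa
  obtain ⟨w, hw⟩ := h
  have ha : a ≠ 0 := by rintro rfl; exact hDa (map_zero D)
  have hw0 : w ≠ 0 := by rintro rfl; exact hDa (by rw [hw, mul_zero])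
  have h1 := hD.nilOrder_map a
  rw [hw, hD.nilOrder_mul ha hw0] at h1
  have h2 := (hD.nilOrder_eq_zero_iff).not.2 hw0
  have h3 := (hD.nilOrder_le_one_iff).not.2 hDa
  omega

end IsLND

namespace Derivation

variable {A : Type*} [CommRing A] [Algebra ℚ A] (D : Derivation ℚ A A) {s : A}

theorem exists_pow_mul_eq_sum (hs : D (D s) = 0) {N : ℕ} {a : A} (ha : (⇑D)^[N] a = 0) :
    ∃ (m : ℕ) (k : ℕ → A), (∀ i, D (k i) = 0) ∧ D s ^ m * a = ∑ i ∈ range N, k i * s ^ i := by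
  induction N generalizing a with
  | zero => exact ⟨0, 0, fun _ => map_zero D, by simpa using ha⟩
  | succ N ih =>
    obtain ⟨m, k, hk, hDa⟩ := ih (a := D a) (by rwa [← Function.iterate_succ_apply])
    set Q : A := ∑ i ∈ range N, ((i + 1 : ℕ) : ℚ)⁻¹ • (k i * s ^ (i + 1))
    have hQ : D (D s ^ (m + 1) * a - Q) = 0 := by
      have hDQ : D Q = D s * (D s ^ m * D a) := by
        simp only [Q, map_sum, map_smul, leibniz, hk, leibniz_pow, smul_eq_mul, mul_zero,
          add_zero, Nat.add_sub_cancel, hDa, mul_sum, mul_smul_comm]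
        refine sum_congr rfl fun i _ => ?_
        rw [inv_natCast_smul_nsmul i.succ_ne_zero]
        ring
      rw [map_sub, hDQ, leibniz, map_pow_eq_zero D hs, smul_zero, add_zero, smul_eq_mul]
      ring
    let k' : ℕ → A
      | 0 => D s ^ (m + 1) * a - Q
      | i + 1 => ((i + 1 : ℕ) : ℚ)⁻¹ • k i
    refine ⟨m + 1, k', fun i => ?_, ?_⟩
    · cases i with
      | zero => exact hQ
      | succ i => simp only [k', map_smul, hk, smul_zero]
    · simp only [sum_range_succ', k', smul_mul_assoc, pow_zero, mul_one, Q]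
      ring

theorem sum_taylor_pow (hs : D (D s) = 0) (E : A) {i N : ℕ} (hi : i < N) :
    ∑ j ∈ range N, (j.factorial : ℚ)⁻¹ • (D s ^ (N - 1 - j) * E ^ j * (⇑D)^[j] (s ^ i)) =
      D s ^ (N - 1) * (s + E) ^ i := by
  have hterm : ∀ j ∈ range N, (j.factorial : ℚ)⁻¹ • (D s ^ (N - 1 - j) * E ^ j * (⇑D)^[j] (s ^ i))
      = D s ^ (N - 1) * (E ^ j * s ^ (i - j) * i.choose j) := by
    intro j hj
    have hj : j ≤ N - 1 := by rw [mem_range] at hj; omega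
    rw [iterate_pow_of_map_map_eq_zero D hs, Nat.descFactorial_eq_factorial_mul_choose, mul_nsmul',
      mul_smul_comm, mul_smul_comm, inv_natCast_smul_nsmul j.factorial_ne_zero, nsmul_eq_mul,
      ← Nat.sub_add_cancel hj, pow_add, Nat.add_sub_cancel]
    ring
  rw [sum_congr rfl hterm, ← mul_sum, add_comm, add_pow,
    ← sum_subset (range_subset_range.2 hi) fun j _ hj => ?_]
  rw [mem_range, not_lt] at hj
  rw [Nat.choose_eq_zero_of_lt (by omega), Nat.cast_zero, mul_zero]

/-- Clearing the denominator `D s`, this says `ψ = exp ((E / D s) • D)` on `A[1 / D s]`. -/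
theorem pow_mul_map_eq_sum [IsDomain A] (hs : D (D s) = 0) (hs0 : D s ≠ 0) (ψ : A →+* A)
    (hψ : ∀ k, D k = 0 → ψ k = k) {E : A} (hψs : ψ s = s + E) {N : ℕ} {a : A}
    (ha : (⇑D)^[N] a = 0) :
    D s ^ (N - 1) * ψ a =
      ∑ j ∈ range N, (j.factorial : ℚ)⁻¹ • (D s ^ (N - 1 - j) * E ^ j * (⇑D)^[j] a) := by
  obtain ⟨m, k, hk, hT⟩ := D.exists_pow_mul_eq_sum hs ha
  have hsm : D (D s ^ m) = 0 := D.map_pow_eq_zero hs m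
  refine mul_left_cancel₀ (pow_ne_zero m hs0) ?_
  calc D s ^ m * (D s ^ (N - 1) * ψ a) = D s ^ (N - 1) * ψ (D s ^ m * a) := by
        rw [map_mul, hψ _ hsm]; ring
    _ = ∑ i ∈ range N, k i * (D s ^ (N - 1) * (s + E) ^ i) := by
        rw [hT, map_sum, mul_sum]
        refine sum_congr rfl fun i _ => ?_
        rw [map_mul, map_pow, hψs, hψ _ (hk i)]
        ring
    _ = ∑ i ∈ range N, k i * ∑ j ∈ range N,
          (j.factorial : ℚ)⁻¹ • (D s ^ (N - 1 - j) * E ^ j * (⇑D)^[j] (s ^ i)) :=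
        sum_congr rfl fun i hi => by rw [D.sum_taylor_pow hs E (mem_range.1 hi)]
    _ = ∑ j ∈ range N,
          (j.factorial : ℚ)⁻¹ • (D s ^ (N - 1 - j) * E ^ j * (⇑D)^[j] (D s ^ m * a)) := by
        simp only [hT, mul_sum, iterate_map_sum, iterate_mul_of_map_eq_zero D (hk _), smul_sum,
          mul_smul_comm]
        rw [sum_comm]
        exact sum_congr rfl fun j _ => sum_congr rfl fun i _ => by ring_nf
    _ = D s ^ m * ∑ j ∈ range N,
          (j.factorial : ℚ)⁻¹ • (D s ^ (N - 1 - j) * E ^ j * (⇑D)^[j] a) := by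
        simp only [iterate_mul_of_map_eq_zero D hsm, mul_sum, mul_smul_comm]
        exact sum_congr rfl fun j _ => by ring_nf

end Derivation

namespace IsLND

variable {A : Type*} [CommRing A] [IsDomain A] [Algebra ℚ A] {D D' : Derivation ℚ A A} {s : A}

theorem mul_map_eq_of_ker_le (hD : IsLND ⇑D) (hker : ∀ a, D a = 0 → D' a = 0)
    (hs : D (D s) = 0) (hs0 : D s ≠ 0) (a : A) : D' s * D a = D s * D' a := by
  obtain ⟨N, hN⟩ := hD a
  obtain ⟨m, k, hk, hT⟩ := D.exists_pow_mul_eq_sum hs hN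
  set S := ∑ i ∈ range N, k i * (i • s ^ (i - 1))
  have hexpand : ∀ δ : Derivation ℚ A A, (∀ i, δ (k i) = 0) → δ (D s) = 0 →
      D s ^ m * δ a = δ s * S := fun δ hδk hδs => by
    have := congrArg δ hT
    simp only [Derivation.leibniz, δ.map_pow_eq_zero hδs, hδk, map_sum, mul_zero, add_zero,
      smul_eq_mul, Derivation.leibniz_pow] at this
    rw [this, mul_sum]
    exact sum_congr rfl fun i _ => by ring
  have hD' := hexpand D' (fun i => hker _ (hk i)) (hker _ hs)
  have hD := hexpand D hk hs
  refine mul_left_cancel₀ (pow_ne_zero m hs0) ?_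
  linear_combination D' s * hD - D s * hD'

theorem map_map_eq_zero_of_ker_le (hD : IsLND ⇑D) (hD' : IsLND ⇑D')
    (hker : ∀ a, D a = 0 → D' a = 0) (hs : D (D s) = 0) (hs0 : D s ≠ 0) : D (D' s) = 0 := by
  have : CharZero A := charZero_of_injective_algebraMap (algebraMap ℚ A).injective
  by_contra hu
  have hu0 : D' s ≠ 0 := by rintro h; rw [h, map_zero] at hu; exact hu rfl
  have hνu : 2 ≤ hD.nilOrder (D' s) := by
    have := (hD.nilOrder_le_one_iff).not.2 hu; omega
  -- `D' x = (D' s / D s) * D x` shows that `D'` cannot lower the `D`-order of `x` once it is `≥ 2`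
  have hstep : ∀ x, 2 ≤ hD.nilOrder x → 2 ≤ hD.nilOrder (D' x) := fun x hx => by
    have hDx : D x ≠ 0 := (hD.nilOrder_le_one_iff).not.1 (by omega)
    have h := hD.nilOrder_mul_of_map_eq_zero hs hs0 (D' x)
    rw [← mul_map_eq_of_ker_le hD hker hs hs0, hD.nilOrder_mul hu0 hDx, hD.nilOrder_map] at h
    omega
  have hiter : ∀ n, 2 ≤ hD.nilOrder ((⇑D')^[n + 1] s) := fun n => by
    induction n with
    | zero => simpa using hνu
    | succ n ih => rw [Function.iterate_succ_apply']; exact hstep _ ih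
  obtain ⟨n, hn⟩ := hD' s
  have := hiter n
  rw [Function.iterate_succ_apply', hn, map_zero, (hD.nilOrder_eq_zero_iff).2 rfl] at this
  omega

/-- The exponential formula for the powers `φ ^ t` is a polynomial identity in `t`; inverting a
Vandermonde matrix isolates its coefficient of `t`, which is `D s ^ n * (φ s - s) * D a` when
`D^[n + 2] a = 0`. -/
theorem dvd_mul_map (hD : IsLND ⇑D) (hs : D (D s) = 0) (hs0 : D s ≠ 0) (φ : A ≃ₐ[ℚ] A)
    (hφ : ∀ k, D k = 0 → φ k = k) (he : D (φ s - s) = 0) (a : A) : D s ∣ (φ s - s) * D a := by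
  set e := φ s - s
  obtain ⟨n, hn⟩ := hD a
  have ha : (⇑D)^[n + 2] a = 0 := hD.iterate_eq_zero_iff.2 ((hD.iterate_eq_zero_iff.1 hn).trans
    (by omega))
  have hfix : ∀ t k, D k = 0 → (φ ^ t) k = k := fun t k hk => by
    rw [AlgEquiv.coe_pow]; exact Function.iterate_fixed (hφ k hk) t
  have hpow : ∀ t : ℕ, (φ ^ t) s = s + (t : ℚ) • e := fun t => by
    induction t with
    | zero => simp
    | succ t ih =>
      rw [pow_succ', AlgEquiv.mul_apply, ih, map_add, map_smul, hφ e he]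
      simp only [e, Nat.cast_succ, add_smul, one_smul]
      ring
  let v : Fin (n + 2) → A := fun j =>
    ((j : ℕ).factorial : ℚ)⁻¹ • (D s ^ (n + 1 - j) * e ^ (j : ℕ) * (⇑D)^[j] a)
  let V := Matrix.vandermonde (fun t : Fin (n + 2) => (t : ℚ))
  have hV : IsUnit V.det := isUnit_iff_ne_zero.2 <| Matrix.det_vandermonde_ne_zero_iff.2 <|
    Nat.cast_injective.comp Fin.val_injective
  let P := (Ideal.span {D s ^ (n + 1)}).restrictScalars ℚ
  have hv : ∀ t, ∑ j, V t j • v j ∈ P := fun t => by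
    have hexp := D.pow_mul_map_eq_sum hs hs0 ((φ ^ (t : ℕ) : A ≃ₐ[ℚ] A) : A →+* A)
      (hfix t) (hpow t) ha
    rw [show n + 2 - 1 = n + 1 from rfl] at hexp
    rw [Submodule.restrictScalars_mem, Ideal.mem_span_singleton]
    refine ⟨_, Eq.trans ?_ hexp.symm⟩
    rw [← Fin.sum_univ_eq_sum_range (fun j => ((j.factorial : ℚ))⁻¹ •
      (D s ^ (n + 1 - j) * ((t : ℚ) • e) ^ j * (⇑D)^[j] a))]
    refine sum_congr rfl fun j _ => ?_
    simp only [V, v, Matrix.vandermonde_apply, smul_pow, smul_comm ((t : ℚ) ^ (j : ℕ)),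
      mul_smul_comm, smul_mul_assoc]
  have h1 := Matrix.mem_of_forall_sum_smul_mem hV hv 1
  simp only [P, v, Submodule.restrictScalars_mem, Ideal.mem_span_singleton, Fin.val_one,
    Nat.factorial_one, Nat.cast_one, inv_one, one_smul, pow_one, Function.iterate_one,
    Nat.add_sub_cancel] at h1
  rw [pow_succ, mul_assoc] at h1
  exact (mul_dvd_mul_iff_left (pow_ne_zero n hs0)).1 h1

theorem isExp_of_map_slice (hD : IsLND ⇑D) (hs : D (D s) = 0) (hs0 : D s ≠ 0) (ψ : A →+* A)
    (hψ : ∀ k, D k = 0 → ψ k = k) {f : A} (hf : D f = 0) (hψs : ψ s = s + D s * f) :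
    IsExp (fun a => f * D a) ψ := by
  intro a N hN
  have hiter : ∀ j, (fun x => f * D x)^[j] a = f ^ j * (⇑D)^[j] a :=
    fun j => D.iterate_smul_of_map_eq_zero hf j a
  obtain ⟨n, hn⟩ := hD a
  have ha : (⇑D)^[N + n] a = 0 := hD.iterate_eq_zero_iff.2 ((hD.iterate_eq_zero_iff.1 hn).trans
    (by omega))
  have hexp := D.pow_mul_map_eq_sum hs hs0 ψ hψ hψs ha
  have hψa : ψ a = ∑ j ∈ range (N + n), (j.factorial : ℚ)⁻¹ • (f ^ j * (⇑D)^[j] a) := by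
    refine mul_left_cancel₀ (pow_ne_zero (N + n - 1) hs0) (hexp.trans ?_)
    rw [mul_sum]
    refine sum_congr rfl fun j hj => ?_
    rw [mul_smul_comm, mul_pow, ← Nat.sub_add_cancel (show j ≤ N + n - 1 by grind), pow_add,
      Nat.add_sub_cancel]
    ring_nf
  rw [hψa, ← sum_subset (range_subset_range.2 (Nat.le_add_right N n)) fun j _ hj => ?_]
  · exact sum_congr rfl fun j _ => by rw [hiter]
  · rw [← hiter, hN j (by simpa using hj), smul_zero]

end IsLND

namespace IsIrreducibleLND

variable {A : Type*} [CommRing A] [IsDomain A] [Algebra ℚ A] {D : Derivation ℚ A A}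

theorem exists_not_dvd_of_prime (hirr : IsIrreducibleLND D) {π : A} (hπ : Prime π) :
    ∃ a, ¬π ∣ D a := by
  have : CharZero A := charZero_of_injective_algebraMap (algebraMap ℚ A).injective
  by_contra! hdvd
  obtain ⟨D', hD'⟩ := D.exists_eq_smul_of_forall_dvd hπ.ne_zero hdvd
  have hDπ : D π = 0 := hirr.2.1.map_eq_zero_of_dvd (hdvd π)
  have hD'π : D' π = 0 := by
    rw [hD', Derivation.smul_apply, smul_eq_mul] at hDπ
    exact (mul_eq_zero.1 hDπ).resolve_left hπ.ne_zero
  have hD'lnd : IsLND ⇑D' := fun a => by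
    obtain ⟨n, hn⟩ := hirr.2.1 a
    rw [hD', D'.iterate_smul_of_map_eq_zero hD'π] at hn
    exact ⟨n, (mul_eq_zero.1 hn).resolve_left (pow_ne_zero n hπ.ne_zero)⟩
  exact hπ.not_isUnit (hirr.2.2 π D' hD'lnd hD'π hD')

theorem dvd_of_forall_dvd_mul [UniqueFactorizationMonoid A] (hirr : IsIrreducibleLND D)
    {u e : A} (h : ∀ a, u ∣ e * D a) : u ∣ e := by
  induction u using UniqueFactorizationMonoid.induction_on_prime generalizing e with
  | h₁ =>
    obtain ⟨a, ha⟩ : ∃ a, D a ≠ 0 := by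
      by_contra! hD
      exact hirr.1 (Derivation.ext hD)
    rw [(mul_eq_zero.1 (zero_dvd_iff.1 (h a))).resolve_right ha]
  | h₂ u hu => exact hu.dvd
  | h₃ u p _ hp ih =>
    obtain ⟨e, rfl⟩ : p ∣ e := by
      obtain ⟨a, ha⟩ := hirr.exists_not_dvd_of_prime hp
      exact ((hp.dvd_or_dvd ((dvd_mul_right p u).trans (h a))).resolve_right ha)
    refine mul_dvd_mul_left p (ih fun a => ?_)
    rw [← mul_dvd_mul_iff_left hp.ne_zero, ← mul_assoc]
    exact h a

end IsIrreducibleLND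

theorem automorphism_fixing_ker_is_exp_general {A : Type*} [CommRing A] [IsDomain A]
    [UniqueFactorizationMonoid A] [Algebra ℚ A]
    (B B' : Derivation ℚ A A)
    (hB : IsLND ⇑B)
    (hirr : IsIrreducibleLND B') (hker : ∀ a : A, B a = 0 ↔ B' a = 0)
    (φ : A ≃ₐ[ℚ] A) (hfix : ∀ a : A, B a = 0 → φ a = a)
    (hcomm : ∀ a : A, φ (B a) = B (φ a))
    (hslice : ∃ d : A, d ≠ 0 ∧ B d = 0 ∧ ∃ (s : A) (n : ℕ), B s = d ^ n) :
    ∃ f : A, B f = 0 ∧ IsExp (fun a => f * B' a) ⇑φ := by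
  obtain ⟨d, hd0, hd, s, n, hs⟩ := hslice
  have hBs : B (B s) = 0 := by rw [hs, B.map_pow_eq_zero hd]
  have hBs0 : B s ≠ 0 := hs ▸ pow_ne_zero n hd0
  have hB's : B' (B' s) = 0 := (hker _).1 <|
    hB.map_map_eq_zero_of_ker_le hirr.2.1 (fun a => (hker a).1) hBs hBs0
  have hB's0 : B' s ≠ 0 := fun h => hBs0 ((hker s).2 h)
  have hfix' : ∀ a, B' a = 0 → φ a = a := fun a ha => hfix a ((hker a).2 ha)
  have he : B' (φ s - s) = 0 := (hker _).1 (by rw [map_sub, ← hcomm, hfix _ hBs, sub_self])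
  obtain ⟨f, hf⟩ := hirr.dvd_of_forall_dvd_mul (hirr.2.1.dvd_mul_map hB's hB's0 φ hfix' he)
  have hB'f : B' f = 0 := by
    rw [hf, Derivation.leibniz, hB's, smul_zero, add_zero, smul_eq_mul] at he
    exact (mul_eq_zero.1 he).resolve_left hB's0
  exact ⟨f, (hker f).2 hB'f, hirr.2.1.isExp_of_map_slice hB's hB's0 (φ : A →+* A) hfix' hB'f
    (by rw [← hf, add_sub_cancel]; rfl)⟩

/-- Let `A` be a UFD containing `ℚ`, `B`, `B'` nonzero locally nilpotent
derivations with `B'` irreducible and `ker B = ker B'`, and `φ` a `ℚ`-algebra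
automorphism of `A` fixing `ker B` pointwise and commuting with `B`.  Assume
there is `0 ≠ d ∈ ker B` such that the extension of `B` to `A_d` has a slice
(equivalently, `∃ s n, B s = d ^ n`).  Then `φ = exp(f B')` for some `f ∈ ker B`. -/
theorem automorphism_fixing_ker_is_exp {A : Type*} [CommRing A] [IsDomain A]
    [UniqueFactorizationMonoid A] [Algebra ℚ A]
    (B B' : Derivation ℚ A A) (hB0 : B ≠ 0) (hB'0 : B' ≠ 0)
    (hB : IsLND ⇑B) (hB' : IsLND ⇑B')
    (hirr : IsIrreducibleLND B') (hker : ∀ a : A, B a = 0 ↔ B' a = 0)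
    (φ : A ≃ₐ[ℚ] A) (hfix : ∀ a : A, B a = 0 → φ a = a)
    (hcomm : ∀ a : A, φ (B a) = B (φ a))
    (hslice : ∃ d : A, d ≠ 0 ∧ B d = 0 ∧ ∃ (s : A) (n : ℕ), B s = d ^ n) :
    ∃ f : A, B f = 0 ∧ IsExp (fun a => f * B' a) ⇑φ :=
  automorphism_fixing_ker_is_exp_general B B' hB hirr hker φ hfix hcomm hslice
end

section
/- Let T be a torus with dim T > 0 and G = T ⋉ (A ⋉ A[P]) with A = ℂ[z], where the product on A ⋉ A[P] is (h,f)·(h̄,f̄) = (h+h̄, f(P−h̄a')+f̄) for a fixed nonzero a' ∈ ℂ[z]. Assume: A[P] ⊆ G is normal; conjugation of T on A[P] is λ⁻¹fλ = μ(λ) f(ρ₁(λ)z, ρ₂(λ)P) for characters μ, ρ₁, ρ₂ with ker ρ₁ ∩ ker ρ₂ = {1}; the conjugation action of T on G/A[P] is nontrivial; and (λ,0,0)·(1,h,f) = (λ,h,f). Then A[P] equals the centralizer in G of the second derived subgroup G^{(2)}. -/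
/-
Let `N = j(A)·k(A[P])`. By comparing the action on `1`, `z` and `P`, an element `ι(σ)j(h)k(f)`
acting on `A[P]` as a `T`-conjugate of a translation `P ↦ P - c` has `μ σ = ρ₁ σ = ρ₂ σ = 1`, hence
`σ = 1`; so `T` normalizes `N` and `N` is normal. As `T` and `A` are abelian, `G' ≤ N` and
`G'' ≤ [N, N] ≤ A[P]`, and the abelian group `A[P]` centralizes `G''`.

Conversely, nontriviality of `T` on `G/A[P]` yields `j(h₀)k(f₀) ∈ G'` with `h₀ ≠ 0`, and then
`G''` contains `[j(h₀)k(f₀), [j(h), k(f)]] = k(Δ_{h₀a'} Δ_{ha'} f)`, where `Δ_c f = f(P + c) - f`.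
An element `ι(λ)j(h)k(f)` centralizing these fixes `Δ_{h₀a'} Δ_{ha'} P² = 2hh₀a'²` for all `h`,
which forces `μ λ = ρ₁ λ = 1`, and `Δ_{h₀a'} Δ_{a'} P³ = 6h₀a'² P + const`, which forces
`ρ₂ λ = 1` and `h = 0`.
-/

noncomputable def scaleZ (c : ℂ) : Polynomial ℂ →+* Polynomial ℂ :=
  (Polynomial.aeval (Polynomial.C c * Polynomial.X) :
    Polynomial ℂ →ₐ[ℂ] Polynomial ℂ).toRingHom

/-- The action `f(z, P) ↦ m · f(r₁ z, r₂ P)` on `ℂ[z][P]`. -/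
noncomputable def torusAct (m r1 r2 : ℂ) (f : Polynomial (Polynomial ℂ)) :
    Polynomial (Polynomial ℂ) :=
  Polynomial.C (Polynomial.C m) *
    ((f.map (scaleZ r1)).comp (Polynomial.C (Polynomial.C r2) * Polynomial.X))

open Polynomial

lemma scaleZ_apply (r : ℂ) (p : ℂ[X]) : scaleZ r p = p.comp (C r * X) := by
  simp [scaleZ, comp, aeval_def]

@[simp] lemma scaleZ_X (r : ℂ) : scaleZ r X = C r * X := by simp [scaleZ]

@[simp] lemma scaleZ_C (r a : ℂ) : scaleZ r (C a) = C a := by simp [scaleZ]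

@[simp] lemma scaleZ_one : scaleZ 1 = RingHom.id ℂ[X] :=
  RingHom.ext fun p => by simp [scaleZ_apply]

lemma scaleZ_comp_scaleZ (r r' : ℂ) : (scaleZ r).comp (scaleZ r') = scaleZ (r * r') :=
  RingHom.ext fun p => by
    simp only [RingHom.comp_apply, scaleZ_apply, comp_assoc, mul_comp, C_comp, X_comp, C_mul]
    ring_nf

@[simp] lemma torusAct_C (m r₁ r₂ : ℂ) (q : ℂ[X]) :
    torusAct m r₁ r₂ (C q) = C (C m * scaleZ r₁ q) := by
  simp [torusAct]

lemma torusAct_torusAct (m r₁ r₂ m' r₁' r₂' : ℂ) (f : ℂ[X][X]) :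
    torusAct m r₁ r₂ (torusAct m' r₁' r₂' f) = torusAct (m * m') (r₁ * r₁') (r₂ * r₂') f := by
  simp only [torusAct, Polynomial.map_mul, map_C, Polynomial.map_comp, Polynomial.map_map,
    scaleZ_comp_scaleZ, mul_comp, C_comp, comp_assoc, Polynomial.map_X, X_comp]
  simp [scaleZ_apply, mul_comm r₁ r₁', mul_comm r₂ r₂', ← mul_assoc]

lemma torusAct_one_one (r : ℂ) (f : ℂ[X][X]) : torusAct 1 1 r f = f.comp (C (C r) * X) := by
  simp [torusAct]

lemma torusAct_one (f : ℂ[X][X]) : torusAct 1 1 1 f = f := by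
  simp [torusAct]

lemma eq_one_of_C_mul_scaleZ_eq {m r : ℂ} {q : ℂ[X]} (hq : q ≠ 0)
    (h₁ : C m * scaleZ r q = q) (hX : C m * scaleZ r (X * q) = X * q) : m = 1 ∧ r = 1 := by
  have hXq : C r * (X * q) = 1 * (X * q) := by
    rw [map_mul, scaleZ_X] at hX
    linear_combination hX - C r * X * h₁
  have hr : r = 1 := by
    rw [← C_inj, C_1]; exact mul_right_cancel₀ (mul_ne_zero X_ne_zero hq) hXq
  subst hr
  have hm : C m * q = 1 * q := by simpa using h₁
  exact ⟨by rw [← C_inj, C_1]; exact mul_right_cancel₀ hq hm, rfl⟩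

lemma eq_one_of_torusAct_comp_torusAct_eq {m r₁ r₂ m' r₁' r₂' s t₁ t₂ : ℂ} {u v : ℂ[X]}
    (hm : m * m' = 1) (hr₁ : r₁ * r₁' = 1) (hr₂ : r₂ * r₂' = 1)
    (H : ∀ f, torusAct m r₁ r₂ ((torusAct m' r₁' r₂' f).comp (X - C u))
      = (torusAct s t₁ t₂ f).comp (X - C v)) :
    s = 1 ∧ t₁ = 1 ∧ t₂ = 1 := by
  have hconst (q : ℂ[X]) : C s * scaleZ t₁ q = q := by
    have := H (C q)
    rwa [torusAct_C m', C_comp, ← torusAct_C m', torusAct_torusAct, hm, hr₁, hr₂, torusAct_one,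
      torusAct_C, C_comp, C_inj, eq_comm] at this
  obtain ⟨rfl, rfl⟩ := eq_one_of_C_mul_scaleZ_eq one_ne_zero (hconst 1) (hconst (X * 1))
  have ht₂ : m * (m' * (r₂' * r₂)) = t₂ := by
    simpa [torusAct, coeff_C, coeff_X] using congrArg (fun p => (p.coeff 1).coeff 0) (H X)
  exact ⟨rfl, rfl, by linear_combination -ht₂ + r₂ * r₂' * hm + hr₂⟩

noncomputable def shiftDiff {R : Type*} [CommRing R] (c : R) (f : R[X]) : R[X] :=
  f.comp (X + C c) - f

lemma shiftDiff_shiftDiff_X_sq {R : Type*} [CommRing R] (c d : R) :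
    shiftDiff d (shiftDiff c (X ^ 2)) = C (2 * c * d) := by
  simp only [shiftDiff, sub_comp, pow_comp, X_comp, add_comp, C_comp, map_mul, map_ofNat]
  ring

lemma shiftDiff_shiftDiff_X_pow_three {R : Type*} [CommRing R] (c d : R) :
    shiftDiff d (shiftDiff c (X ^ 3)) = C (6 * c * d) * X + C (3 * c * d * (c + d)) := by
  simp only [shiftDiff, sub_comp, pow_comp, X_comp, add_comp, C_comp, map_mul, map_add,
    map_ofNat]
  ring

lemma eq_one_of_torusAct_comp_shiftDiff_eq {m r₁ r₂ : ℂ} {b d u : ℂ[X]} (hb : b ≠ 0)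
    (hd : d ≠ 0) (H : ∀ h f, (torusAct m r₁ r₂ (shiftDiff d (shiftDiff (h * b) f))).comp (X - C u)
      = shiftDiff d (shiftDiff (h * b) f)) :
    m = 1 ∧ r₁ = 1 ∧ r₂ = 1 ∧ u = 0 := by
  have hsq (h : ℂ[X]) : C m * scaleZ r₁ (h * (2 * b * d)) = h * (2 * b * d) := by
    have := H h (X ^ 2)
    rw [shiftDiff_shiftDiff_X_sq, torusAct_C, C_comp, C_inj] at this
    rwa [show h * (2 * b * d) = 2 * (h * b) * d by ring]
  have hq : 2 * b * d ≠ 0 := mul_ne_zero (mul_ne_zero two_ne_zero hb) hd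
  obtain ⟨rfl, rfl⟩ := eq_one_of_C_mul_scaleZ_eq hq (by simpa using hsq 1) (hsq X)
  have hcube (x : ℂ[X]) : 6 * b * d * (C r₂ * (x - u)) = 6 * b * d * x := by
    have := congrArg (eval x) (H 1 (X ^ 3))
    simpa only [one_mul, shiftDiff_shiftDiff_X_pow_three, torusAct_one_one, eval_comp, eval_add,
      eval_mul, eval_C, eval_X, eval_sub, add_left_inj] using this
  have h6 : 6 * b * d ≠ 0 := mul_ne_zero (mul_ne_zero (by norm_num) hb) hd
  have hu : u = 0 := by simpa [h6] using hcube u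
  subst hu
  have hr₂ : C r₂ = C 1 := by simpa [h6] using hcube 1
  exact ⟨rfl, rfl, C_inj.mp hr₂, rfl⟩

theorem Subgroup.commutator_sup_le_right_of_isMulCommutative {G : Type*} [Group G]
    (H K : Subgroup G) [K.Normal] [IsMulCommutative H] : ⁅H ⊔ K, H ⊔ K⁆ ≤ K := by
  suffices ⁅H ⊔ K, H ⊔ K⁆.map (QuotientGroup.mk' K) = ⊥ by
    rwa [Subgroup.map_eq_bot_iff, QuotientGroup.ker_mk'] at this
  rw [Subgroup.map_commutator, Subgroup.map_sup, QuotientGroup.map_mk'_self, sup_bot_eq,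
    Subgroup.commutator_self_eq_bot_iff]
  infer_instance

open Multiplicative Function
open scoped commutatorElement

section Presentation

variable {G T : Type*} [Group G] [Group T] {a' : ℂ[X]} {ι : T →* G}
  {j : Multiplicative ℂ[X] →* G} {k : Multiplicative ℂ[X][X] →* G} {μ ρ₁ ρ₂ : T →* ℂˣ}

theorem injective_right_of_bijective_mul_mul
    (hbij : Bijective fun t : T × ℂ[X] × ℂ[X][X] => ι t.1 * j (ofAdd t.2.1) * k (ofAdd t.2.2)) :
    Injective k := by
  intro f f' hff'
  have := hbij.injective (a₁ := (1, 0, toAdd f)) (a₂ := (1, 0, toAdd f')) (by simpa using hff')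
  simpa using congrArg (fun t => t.2.2) this

theorem range_sup_range_sup_range_eq_top
    (hsurj : Surjective fun t : T × ℂ[X] × ℂ[X][X] => ι t.1 * j (ofAdd t.2.1) * k (ofAdd t.2.2)) :
    ι.range ⊔ (j.range ⊔ k.range) = ⊤ := by
  refine eq_top_iff.mpr fun g _ => ?_
  obtain ⟨⟨t, h, f⟩, rfl⟩ := hsurj g
  dsimp only
  rw [mul_assoc]
  exact Subgroup.mul_mem_sup ⟨t, rfl⟩ (Subgroup.mul_mem_sup ⟨_, rfl⟩ ⟨_, rfl⟩)

theorem conj_k_eq_torusAct_comp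
    (hconjA : ∀ (h : ℂ[X]) (f : ℂ[X][X]),
      (j (ofAdd h))⁻¹ * k (ofAdd f) * j (ofAdd h) = k (ofAdd (f.comp (X - C (h * a')))))
    (hconjT : ∀ (t : T) (f : ℂ[X][X]),
      (ι t)⁻¹ * k (ofAdd f) * ι t = k (ofAdd (torusAct (μ t) (ρ₁ t) (ρ₂ t) f)))
    (t : T) (h : ℂ[X]) (f' f : ℂ[X][X]) :
    (ι t * j (ofAdd h) * k (ofAdd f'))⁻¹ * k (ofAdd f) * (ι t * j (ofAdd h) * k (ofAdd f'))
      = k (ofAdd ((torusAct (μ t) (ρ₁ t) (ρ₂ t) f).comp (X - C (h * a')))) := by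
  calc _ = (k (ofAdd f'))⁻¹ * ((j (ofAdd h))⁻¹ * ((ι t)⁻¹ * k (ofAdd f) * ι t) * j (ofAdd h))
        * k (ofAdd f') := by group
    _ = _ := by rw [hconjT, hconjA, ((Commute.all _ _).map k).inv_mul_cancel]

theorem commutatorElement_j_mul_k
    (hconjA : ∀ (h : ℂ[X]) (f : ℂ[X][X]),
      (j (ofAdd h))⁻¹ * k (ofAdd f) * j (ofAdd h) = k (ofAdd (f.comp (X - C (h * a')))))
    (h : ℂ[X]) (f w : ℂ[X][X]) :
    ⁅j (ofAdd h) * k (ofAdd f), k (ofAdd w)⁆ = k (ofAdd (shiftDiff (h * a') w)) := by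
  have hconj :
      j (ofAdd h) * k (ofAdd w) * (j (ofAdd h))⁻¹ = k (ofAdd (w.comp (X + C (h * a')))) := by
    simpa [sub_eq_add_neg] using hconjA (-h) w
  calc _ = j (ofAdd h) * (k (ofAdd f) * k (ofAdd w) * (k (ofAdd f))⁻¹) * (j (ofAdd h))⁻¹
        * (k (ofAdd w))⁻¹ := by rw [commutatorElement_def]; group
    _ = _ := by
      rw [((Commute.all _ _).map k).mul_inv_cancel, hconj, ← map_inv, ← map_mul, shiftDiff,
        sub_eq_add_neg, ofAdd_add, ofAdd_neg]

theorem conj_j_mem_range_sup_range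
    (hbij : Bijective fun t : T × ℂ[X] × ℂ[X][X] => ι t.1 * j (ofAdd t.2.1) * k (ofAdd t.2.2))
    (hconjA : ∀ (h : ℂ[X]) (f : ℂ[X][X]),
      (j (ofAdd h))⁻¹ * k (ofAdd f) * j (ofAdd h) = k (ofAdd (f.comp (X - C (h * a')))))
    (hconjT : ∀ (t : T) (f : ℂ[X][X]),
      (ι t)⁻¹ * k (ofAdd f) * ι t = k (ofAdd (torusAct (μ t) (ρ₁ t) (ρ₂ t) f)))
    (hker : ∀ t, ρ₁ t = 1 → ρ₂ t = 1 → t = 1) (t : T) (h : ℂ[X]) :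
    ι t * j (ofAdd h) * (ι t)⁻¹ ∈ j.range ⊔ k.range := by
  obtain ⟨⟨s, h', f'⟩, hs⟩ := hbij.surjective (ι t * j (ofAdd h) * (ι t)⁻¹)
  dsimp only at hs
  have hconj (f : ℂ[X][X]) :
      torusAct (μ t⁻¹) (ρ₁ t⁻¹) (ρ₂ t⁻¹) ((torusAct (μ t) (ρ₁ t) (ρ₂ t) f).comp (X - C (h * a')))
        = (torusAct (μ s) (ρ₁ s) (ρ₂ s) f).comp (X - C (h' * a')) := by
    refine ofAdd.injective (injective_right_of_bijective_mul_mul hbij ?_)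
    rw [← hconjT, ← conj_k_eq_torusAct_comp hconjA hconjT t h 0 f,
      ← conj_k_eq_torusAct_comp hconjA hconjT s h' f' f, hs, ofAdd_zero, map_one, mul_one, map_inv]
    group
  have hval (χ : T →* ℂˣ) : (χ t⁻¹ : ℂ) * χ t = 1 := by
    rw [← Units.val_mul, ← map_mul, inv_mul_cancel, map_one, Units.val_one]
  obtain ⟨-, hρ₁, hρ₂⟩ :=
    eq_one_of_torusAct_comp_torusAct_eq (hval μ) (hval ρ₁) (hval ρ₂) hconj
  obtain rfl : s = 1 := hker s (Units.ext hρ₁) (Units.ext hρ₂)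
  rw [← hs, map_one, one_mul]
  exact Subgroup.mul_mem_sup ⟨_, rfl⟩ ⟨_, rfl⟩

theorem normal_range_sup_range
    (hbij : Bijective fun t : T × ℂ[X] × ℂ[X][X] => ι t.1 * j (ofAdd t.2.1) * k (ofAdd t.2.2))
    [hk : k.range.Normal]
    (hconjA : ∀ (h : ℂ[X]) (f : ℂ[X][X]),
      (j (ofAdd h))⁻¹ * k (ofAdd f) * j (ofAdd h) = k (ofAdd (f.comp (X - C (h * a')))))
    (hconjT : ∀ (t : T) (f : ℂ[X][X]),
      (ι t)⁻¹ * k (ofAdd f) * ι t = k (ofAdd (torusAct (μ t) (ρ₁ t) (ρ₂ t) f)))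
    (hker : ∀ t, ρ₁ t = 1 → ρ₂ t = 1 → t = 1) :
    (j.range ⊔ k.range).Normal := by
  rw [← Subgroup.normalizer_eq_top_iff, eq_top_iff,
    ← range_sup_range_sup_range_eq_top hbij.surjective]
  refine sup_le (Subgroup.le_normalizer_iff.mpr ?_) Subgroup.le_normalizer
  rintro _ ⟨t, rfl⟩ y hy
  have hle : j.range ⊔ k.range ≤ (j.range ⊔ k.range).comap (MulAut.conj (ι t)).toMonoidHom := by
    refine sup_le ?_ ?_
    · rintro _ ⟨h, rfl⟩
      exact conj_j_mem_range_sup_range hbij hconjA hconjT hker t (toAdd h)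
    · rintro _ ⟨f, rfl⟩
      exact Subgroup.mem_sup_right (hk.conj_mem _ ⟨f, rfl⟩ _)
  exact hle hy

theorem commutator_le_range_sup_range [IsMulCommutative T]
    (hsurj : Surjective fun t : T × ℂ[X] × ℂ[X][X] => ι t.1 * j (ofAdd t.2.1) * k (ofAdd t.2.2))
    [(j.range ⊔ k.range).Normal] :
    commutator G ≤ j.range ⊔ k.range := by
  rw [commutator_def, ← range_sup_range_sup_range_eq_top hsurj]
  exact Subgroup.commutator_sup_le_right_of_isMulCommutative _ _

theorem exists_j_mul_k_mem_of_not_le [k.range.Normal] {H : Subgroup G}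
    (hle : H ≤ j.range ⊔ k.range) (hH : ¬ H ≤ k.range) :
    ∃ h ≠ 0, ∃ f, j (ofAdd h) * k (ofAdd f) ∈ H := by
  obtain ⟨y, hyH, hyk⟩ := SetLike.not_le_iff_exists.mp hH
  obtain ⟨_, ⟨h, rfl⟩, _, ⟨f, rfl⟩, rfl⟩ := Subgroup.mem_sup_of_normal_right.mp (hle hyH)
  refine ⟨toAdd h, fun h0 => hyk ?_, toAdd f, hyH⟩
  rw [toAdd_eq_zero.mp h0, map_one, one_mul]
  exact ⟨f, rfl⟩

theorem mem_range_of_mem_centralizer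
    (hbij : Bijective fun t : T × ℂ[X] × ℂ[X][X] => ι t.1 * j (ofAdd t.2.1) * k (ofAdd t.2.2))
    (hconjA : ∀ (h : ℂ[X]) (f : ℂ[X][X]),
      (j (ofAdd h))⁻¹ * k (ofAdd f) * j (ofAdd h) = k (ofAdd (f.comp (X - C (h * a')))))
    (hconjT : ∀ (t : T) (f : ℂ[X][X]),
      (ι t)⁻¹ * k (ofAdd f) * ι t = k (ofAdd (torusAct (μ t) (ρ₁ t) (ρ₂ t) f)))
    (hker : ∀ t, ρ₁ t = 1 → ρ₂ t = 1 → t = 1) (ha' : a' ≠ 0) {h₀ : ℂ[X]} {f₀ : ℂ[X][X]}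
    (hh₀ : h₀ ≠ 0) (hy : j (ofAdd h₀) * k (ofAdd f₀) ∈ commutator G) {x : G}
    (hx : x ∈ Subgroup.centralizer (⁅commutator G, commutator G⁆ : Subgroup G)) :
    x ∈ k.range := by
  obtain ⟨⟨t, h, f⟩, rfl⟩ := hbij.surjective x
  dsimp only at hx ⊢
  have hfix (c : ℂ[X]) (g : ℂ[X][X]) :
      (torusAct (μ t) (ρ₁ t) (ρ₂ t) (shiftDiff (h₀ * a') (shiftDiff (c * a') g))).comp
        (X - C (h * a')) = shiftDiff (h₀ * a') (shiftDiff (c * a') g) := by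
    have hmem : k (ofAdd (shiftDiff (h₀ * a') (shiftDiff (c * a') g)))
        ∈ (⁅commutator G, commutator G⁆ : Subgroup G) := by
      have hcomm := commutatorElement_j_mul_k hconjA c 0 g
      rw [ofAdd_zero, map_one, mul_one] at hcomm
      rw [← commutatorElement_j_mul_k hconjA h₀ f₀, ← hcomm]
      exact Subgroup.commutator_mem_commutator hy
        (Subgroup.commutator_mem_commutator (Subgroup.mem_top _) (Subgroup.mem_top _))
    refine ofAdd.injective (injective_right_of_bijective_mul_mul hbij ?_)
    rw [← conj_k_eq_torusAct_comp hconjA hconjT t h f, mul_assoc,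
      Subgroup.mem_centralizer_iff.mp hx _ hmem, inv_mul_cancel_left]
  obtain ⟨-, hρ₁, hρ₂, hu⟩ :=
    eq_one_of_torusAct_comp_shiftDiff_eq ha' (mul_ne_zero hh₀ ha') hfix
  obtain rfl : t = 1 := hker t (Units.ext hρ₁) (Units.ext hρ₂)
  obtain rfl : h = 0 := (mul_eq_zero.mp hu).resolve_right ha'
  exact ⟨ofAdd f, by simp⟩

end Presentation

theorem aP_eq_centralizer_second_derived_general
    {G : Type*} [Group G] (n : ℕ)
    (a' : Polynomial ℂ) (ha' : a' ≠ 0)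
    (ι : (Fin n → ℂˣ) →* G)
    (j : Multiplicative (Polynomial ℂ) →* G)
    (k : Multiplicative (Polynomial (Polynomial ℂ)) →* G)
    (μ ρ₁ ρ₂ : (Fin n → ℂˣ) →* ℂˣ)
    (hbij : Function.Bijective
      (fun t : (Fin n → ℂˣ) × Polynomial ℂ × Polynomial (Polynomial ℂ) =>
        ι t.1 * j (Multiplicative.ofAdd t.2.1) * k (Multiplicative.ofAdd t.2.2)))
    (hnorm : (MonoidHom.range k).Normal)
    (hconjA : ∀ (h : Polynomial ℂ) (f : Polynomial (Polynomial ℂ)),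
      (j (Multiplicative.ofAdd h))⁻¹ * k (Multiplicative.ofAdd f) * j (Multiplicative.ofAdd h)
        = k (Multiplicative.ofAdd (f.comp (X - C (h * a')))))
    (hconjT : ∀ (lam : Fin n → ℂˣ) (f : Polynomial (Polynomial ℂ)),
      (ι lam)⁻¹ * k (Multiplicative.ofAdd f) * ι lam
        = k (Multiplicative.ofAdd (torusAct (μ lam : ℂ) (ρ₁ lam : ℂ) (ρ₂ lam : ℂ) f)))
    (hker : ∀ lam : Fin n → ℂˣ, ρ₁ lam = 1 → ρ₂ lam = 1 → lam = 1)
    (hnontriv : ∃ (lam : Fin n → ℂˣ) (g : G),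
      (ι lam)⁻¹ * g * ι lam * g⁻¹ ∉ MonoidHom.range k) :
    MonoidHom.range k =
      Subgroup.centralizer
        (↑(⁅(⁅(⊤ : Subgroup G), (⊤ : Subgroup G)⁆ : Subgroup G),
           (⁅(⊤ : Subgroup G), (⊤ : Subgroup G)⁆ : Subgroup G)⁆ : Subgroup G) : Set G) := by
  have := normal_range_sup_range hbij hconjA hconjT hker
  have hG' := commutator_le_range_sup_range hbij.surjective
  have hG'' : ⁅commutator G, commutator G⁆ ≤ k.range :=
    (Subgroup.commutator_mono hG' hG').trans
      (Subgroup.commutator_sup_le_right_of_isMulCommutative _ _)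
  have hG'k : ¬ commutator G ≤ k.range := by
    obtain ⟨t, g, hg⟩ := hnontriv
    refine fun hle => hg (hle ?_)
    simpa [commutator_def, commutatorElement_def] using
      Subgroup.commutator_mem_commutator (Subgroup.mem_top (ι t)⁻¹) (Subgroup.mem_top g)
  obtain ⟨h₀, hh₀, f₀, hy⟩ := exists_j_mul_k_mem_of_not_le hG' hG'k
  refine le_antisymm ((Subgroup.le_centralizer _).trans (Subgroup.centralizer_le hG'')) ?_
  exact fun x hx => mem_range_of_mem_centralizer hbij hconjA hconjT hker ha' hh₀ hy hx

/-- (Lemma on the presentation of `G = T ⋉ (A ⋉ A[P])`, `A = ℂ[z]`.)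
Let `T = (ℂ*)ⁿ` with `n ≥ 1` be a torus and let `G` be a group which is the
semidirect product `T ⋉ (A ⋉ A[P])`: every element of `G` is uniquely
`ι(λ)·j(h)·k(f)`, the product on `A ⋉ A[P]` is
`(h,f)·(h̄,f̄) = (h+h̄, f(P−h̄a')+f̄)` for a fixed `0 ≠ a' ∈ ℂ[z]`, the subgroup
`A[P] = range k` is normal, conjugation of `T` on `A[P]` is
`λ⁻¹ f λ = μ(λ)·f(ρ₁(λ)z, ρ₂(λ)P)` for characters `μ, ρ₁, ρ₂` with
`ker ρ₁ ∩ ker ρ₂ = 1`, and the conjugation action of `T` on `G/A[P]` is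
nontrivial.  Then `A[P]` is the centralizer in `G` of the second derived
subgroup `G⁽²⁾`. -/
theorem aP_eq_centralizer_second_derived
    {G : Type*} [Group G] (n : ℕ) (hn : 0 < n)
    (a' : Polynomial ℂ) (ha' : a' ≠ 0)
    (ι : (Fin n → ℂˣ) →* G)
    (j : Multiplicative (Polynomial ℂ) →* G)
    (k : Multiplicative (Polynomial (Polynomial ℂ)) →* G)
    (μ ρ₁ ρ₂ : (Fin n → ℂˣ) →* ℂˣ)
    (hbij : Function.Bijective
      (fun t : (Fin n → ℂˣ) × Polynomial ℂ × Polynomial (Polynomial ℂ) =>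
        ι t.1 * j (Multiplicative.ofAdd t.2.1) * k (Multiplicative.ofAdd t.2.2)))
    (hnorm : (MonoidHom.range k).Normal)
    (hconjA : ∀ (h : Polynomial ℂ) (f : Polynomial (Polynomial ℂ)),
      (j (Multiplicative.ofAdd h))⁻¹ * k (Multiplicative.ofAdd f) * j (Multiplicative.ofAdd h)
        = k (Multiplicative.ofAdd (f.comp (X - C (h * a')))))
    (hconjT : ∀ (lam : Fin n → ℂˣ) (f : Polynomial (Polynomial ℂ)),
      (ι lam)⁻¹ * k (Multiplicative.ofAdd f) * ι lam
        = k (Multiplicative.ofAdd (torusAct (μ lam : ℂ) (ρ₁ lam : ℂ) (ρ₂ lam : ℂ) f)))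
    (hker : ∀ lam : Fin n → ℂˣ, ρ₁ lam = 1 → ρ₂ lam = 1 → lam = 1)
    (hnontriv : ∃ (lam : Fin n → ℂˣ) (g : G),
      (ι lam)⁻¹ * g * ι lam * g⁻¹ ∉ MonoidHom.range k) :
    MonoidHom.range k =
      Subgroup.centralizer
        (↑(⁅(⁅(⊤ : Subgroup G), (⊤ : Subgroup G)⁆ : Subgroup G),
           (⁅(⊤ : Subgroup G), (⊤ : Subgroup G)⁆ : Subgroup G)⁆ : Subgroup G) : Set G) :=
  aP_eq_centralizer_second_derived_general n a' ha' ι j k μ ρ₁ ρ₂ hbij hnorm hconjA hconjT hker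
    hnontriv
end
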